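/- K = B^{op}·T_{1,1}, i.e., every element of K factors as b·t with b a lower triangular matrix in K and t ∈ T_{1,1}. Consequently, also K^η = (B^{op})^η·(T_{1,1})^η, where H^η := ηHη^{−1} and η = diag(1,ϖ). -/

import Mathlib

open Matrix
open scoped Pointwise

noncomputable section

/-- Ambient data for the paper: `E` is the unramified quadratic extension `F(√ε)` of a
nonarchimedean local field `F` of odd residual characteristic.  The field `F` is realized
as the fixed field of the nontrivial `F`-automorphism `σ` of `E`; `ν` is the discrete
valuation of `E` (extending the valuation of `F` normalized by `ν ϖ = 1` at a uniformizer
`ϖ` of `F`, and still surjecting onto `ℤ` since `E/F` is unramified); `q` is the (odd)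
cardinality of the residue field of `F` (so `q²` is that of `E`); `ε ∈ O_F^×` is a
non-square unit and `sqε = √ε` generates `E` over `F`.  The standard facts about the
norm map and squares are included as fields. -/
structure Setting (E : Type*) [Field E] where
  /-- the nontrivial `F`-automorphism of `E`, written `x̄ = σ x` -/
  σ : E →+* E
  σσ : ∀ x, σ (σ x) = x
  σ_ne_id : σ ≠ RingHom.id E
  /-- the valuation (only its values at nonzero elements matter) -/
  ν : E → ℤ
  ν_mul : ∀ {x y : E}, x ≠ 0 → y ≠ 0 → ν (x * y) = ν x + ν y
  ν_add : ∀ {x y : E}, x ≠ 0 → y ≠ 0 → x + y ≠ 0 → min (ν x) (ν y) ≤ ν (x + y)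
  ν_σ : ∀ x, ν (σ x) = ν x
  ν_surj : ∀ n : ℤ, ∃ x : E, x ≠ 0 ∧ ν x = n
  /-- a uniformizer of `F` -/
  ϖ : E
  ϖ_ne_zero : ϖ ≠ 0
  ϖ_fixed : σ ϖ = ϖ
  ν_ϖ : ν ϖ = 1
  /-- the residual cardinality of `F` -/
  q : ℕ
  q_odd : Odd q
  one_lt_q : 1 < q
  /-- a non-square unit of `O_F` -/
  ε : E
  ε_fixed : σ ε = ε
  ε_ne_zero : ε ≠ 0
  ν_ε : ν ε = 0
  ε_nonsquare : ¬ ∃ f : E, σ f = f ∧ f * f = ε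
  /-- a square root `√ε ∈ E` of `ε` -/
  sqε : E
  sqε_sq : sqε * sqε = ε
  sqε_conj : σ sqε = -sqε
  /-- `E = F(√ε)` -/
  generates : ∀ x : E, ∃ a b : E, σ a = a ∧ σ b = b ∧ x = a + b * sqε
  /-- the norm maps `O_E^×` onto `O_F^×` -/
  norm_surj_units : ∀ y : E, σ y = y → y ≠ 0 → ν y = 0 →
    ∃ x : E, x ≠ 0 ∧ ν x = 0 ∧ x * σ x = y
  /-- the norm maps `1 + p_E^d` onto `1 + p_F^d` for every `d ≥ 1` -/
  norm_surj_one_add : ∀ d : ℤ, 1 ≤ d → ∀ y : E, σ y = y → (y - 1 = 0 ∨ d ≤ ν (y - 1)) →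
    ∃ x : E, (x - 1 = 0 ∨ d ≤ ν (x - 1)) ∧ x * σ x = y
  /-- the residue field of `F` has `q` elements -/
  residue_F : ∃ R : Finset E, R.card = q ∧ (∀ r ∈ R, σ r = r ∧ (r = 0 ∨ 0 ≤ ν r)) ∧
    ∀ x : E, σ x = x → (x = 0 ∨ 0 ≤ ν x) →
      ∃! r, r ∈ R ∧ (x - r = 0 ∨ 1 ≤ ν (x - r))
  /-- the residue field of `E` has `q²` elements -/
  residue_E : ∃ R : Finset E, R.card = q ^ 2 ∧ (∀ r ∈ R, r = 0 ∨ 0 ≤ ν r) ∧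
    ∀ x : E, (x = 0 ∨ 0 ≤ ν x) →
      ∃! r, r ∈ R ∧ (x - r = 0 ∨ 1 ≤ ν (x - r))
  /-- Hensel: a unit of `O_E` that is a square modulo `p_E` is a square (residue char. odd) -/
  hensel_sq : ∀ u w : E, u ≠ 0 → ν u = 0 → w ≠ 0 → ν w = 0 →
    (w * w - u = 0 ∨ 1 ≤ ν (w * w - u)) → ∃ v : E, v * v = u

namespace Setting

variable {E : Type*} [Field E] (S : Setting E)

/-- `x` lies in the ring of integers `O_E`. -/
def inOE (x : E) : Prop := x = 0 ∨ 0 ≤ S.ν x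

/-- `x` lies in the (fractional, if `d ≤ 0`) ideal `p_E^d`. -/
def inpE (d : ℤ) (x : E) : Prop := x = 0 ∨ d ≤ S.ν x

/-- `x` is a unit of `O_E`. -/
def unitOE (x : E) : Prop := x ≠ 0 ∧ S.ν x = 0

/-- `x` lies in the subfield `F` (the fixed field of `σ`). -/
def inF (x : E) : Prop := S.σ x = x

/-- `x` is a unit of `O_F`. -/
def unitOF (x : E) : Prop := S.σ x = x ∧ x ≠ 0 ∧ S.ν x = 0

/-- `x` lies in `E¹`, i.e. has norm one. -/
def normOne (x : E) : Prop := x * S.σ x = 1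

/-- `x ∈ √ε·F`. -/
def inSqεF (x : E) : Prop := ∃ f : E, S.σ f = f ∧ x = S.sqε * f

/-- Entrywise application of `σ` to a matrix, `ḡ`. -/
def mbar (g : Matrix (Fin 2) (Fin 2) E) : Matrix (Fin 2) (Fin 2) E :=
  Matrix.of fun i j => S.σ (g i j)

/-- The antidiagonal matrix `w = [[0,1],[1,0]]` defining the hermitian form. -/
def wmat (_S : Setting E) : Matrix (Fin 2) (Fin 2) E := !![0, 1; 1, 0]

/-- Membership in `G = U(1,1)(F) = {g : ḡᵀ·w·g = w}`. -/
def inG (g : Matrix (Fin 2) (Fin 2) E) : Prop :=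
  (S.mbar g)ᵀ * S.wmat * g = S.wmat

/-- `G = U(1,1)(F)`, as a set of 2×2 matrices over `E`. -/
def Gset : Set (Matrix (Fin 2) (Fin 2) E) := {g | S.inG g}

/-- `G_der = SU(1,1)(F) = {g ∈ G : det g = 1}`. -/
def Gder : Set (Matrix (Fin 2) (Fin 2) E) := {g | S.inG g ∧ g.det = 1}

/-- The standard maximal compact subgroup `K` of `G` (entries in `O_E`). -/
def Kset : Set (Matrix (Fin 2) (Fin 2) E) := {g | S.inG g ∧ ∀ i j, S.inOE (g i j)}

/-- The congruence subgroup `K_d = {k ∈ K : k − 1 ∈ p_E^d·M₂(O_E)}`. -/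
def Kfil (d : ℤ) : Set (Matrix (Fin 2) (Fin 2) E) :=
  {g | g ∈ S.Kset ∧ ∀ i j, S.inpE d ((g - 1) i j)}

/-- The subgroup `B` of upper triangular matrices in `K`. -/
def Bset : Set (Matrix (Fin 2) (Fin 2) E) := {g | g ∈ S.Kset ∧ g 1 0 = 0}

/-- The subgroup `B^op` of lower triangular matrices in `K`. -/
def Bop : Set (Matrix (Fin 2) (Fin 2) E) := {g | g ∈ S.Kset ∧ g 0 1 = 0}

/-- The center `Z = {z·I : z ∈ E¹}` of `G`. -/
def Zset : Set (Matrix (Fin 2) (Fin 2) E) :=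
  {g | ∃ z : E, S.normOne z ∧ g = z • (1 : Matrix (Fin 2) (Fin 2) E)}

/-- The matrix `α^t = diag(ϖ^{−t}, ϖ^t)`. -/
def αmat (t : ℕ) : Matrix (Fin 2) (Fin 2) E := !![(S.ϖ ^ t)⁻¹, 0; 0, S.ϖ ^ t]

/-- The matrix `η = diag(1, ϖ)` (it normalizes `G`). -/
def ηmat : Matrix (Fin 2) (Fin 2) E := !![1, 0; 0, S.ϖ]

/-- The matrix `η⁻¹ = diag(1, ϖ⁻¹)`. -/
def ηinv : Matrix (Fin 2) (Fin 2) E := !![1, 0; 0, S.ϖ⁻¹]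

/-- The torus `T_{γ₁,γ₂} = {[[a,bγ₁],[bγ₂,a]] : a·ā + b·b̄·γ₁γ₂ = 1, ā·b ∈ √ε·F}`. -/
def Tset (γ₁ γ₂ : E) : Set (Matrix (Fin 2) (Fin 2) E) :=
  {g | ∃ a b : E, g = !![a, b * γ₁; b * γ₂, a] ∧
    a * S.σ a + b * S.σ b * (γ₁ * γ₂) = 1 ∧ S.inSqεF (S.σ a * b)}

/-- The Moy–Prasad filtration subgroup `G_{y,r}` of `G` (for `r > 0`). -/
def Gfil (y r : ℚ) : Set (Matrix (Fin 2) (Fin 2) E) :=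
  {g | S.inG g ∧ S.inpE ⌈r⌉ (g 0 0 - 1) ∧ S.inpE ⌈r⌉ (g 1 1 - 1) ∧
    S.inpE ⌈r - y⌉ (g 0 1) ∧ S.inpE ⌈r + y⌉ (g 1 0)}

/-- `G_{y,0+} = ⋃_{r>0} G_{y,r}`. -/
def Gfil0plus (y : ℚ) : Set (Matrix (Fin 2) (Fin 2) E) :=
  {g | ∃ r : ℚ, 0 < r ∧ g ∈ S.Gfil y r}

end Setting

/-!
Write `N(a, b) = a ā + b b̄`. As the residue characteristic is odd, `2` is a unit, and then
`ν(x + c) = min(ν x, ν c)` for `x ∈ F`, `c ∈ √ε·F`; it follows that `ν N(a, b) = 2 min(ν a, ν b)`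
whenever `ā b ∈ √ε·F`. For `t ∈ T_{1,1}` this forces the entries of `t` to be integral. For
`k ∈ K`, the first row `(α, β)` of `k` satisfies `α β̄ + ᾱ β = 0` and is primitive, so `N(α, β)`
is a unit of `O_F`, hence a norm `p p̄`. The symmetric matrix `t` with first row `(α/p, β/p)`
lies in `T_{1,1}`, and `k t⁻¹ = k t̄` is lower triangular. Conjugation by `η` is multiplicative,
so the factorization transports to `K^η`.
-/

namespace Setting

variable {E : Type*} [Field E] (S : Setting E)

lemma ν_one : S.ν 1 = 0 := by
  have := S.ν_mul (one_ne_zero (α := E)) one_ne_zero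
  rw [one_mul] at this
  omega

open Classical in
def val : AddValuation E (WithTop ℤ) :=
  AddValuation.of (fun x => if x = 0 then ⊤ else (S.ν x : WithTop ℤ)) (if_pos rfl)
    (by simp [S.ν_one])
    (fun x y => by
      rcases eq_or_ne x 0 with rfl | hx; · simp
      rcases eq_or_ne y 0 with rfl | hy; · simp
      rcases eq_or_ne (x + y) 0 with hxy | hxy; · simp [hxy]
      simpa [hx, hy, hxy] using S.ν_add hx hy hxy)
    (fun x y => by
      rcases eq_or_ne x 0 with rfl | hx; · simp
      rcases eq_or_ne y 0 with rfl | hy; · simp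
      simp [hx, hy, S.ν_mul hx hy])

variable {S}

lemma val_of_ne_zero {x : E} (hx : x ≠ 0) : S.val x = S.ν x := if_neg hx

lemma val_σ (x : E) : S.val (S.σ x) = S.val x := by
  rcases eq_or_ne x 0 with rfl | hx
  · rw [map_zero]
  rw [val_of_ne_zero hx, val_of_ne_zero ((map_ne_zero S.σ).mpr hx), S.ν_σ]

lemma eq_zero_or_le_ν_iff {d : ℤ} {x : E} :
    x = 0 ∨ d ≤ S.ν x ↔ (d : WithTop ℤ) ≤ S.val x := by
  rcases eq_or_ne x 0 with rfl | hx
  · simp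
  simp [hx, val_of_ne_zero hx]

lemma inOE_iff {x : E} : S.inOE x ↔ 0 ≤ S.val x := eq_zero_or_le_ν_iff (d := 0)

/-- If `2 ∈ p_F`, then `r ↦ r + 1` is a fixed-point-free involution of the residue field of `F`,
whose cardinality `q` would then be even. -/
lemma val_two : S.val 2 = 0 := by
  have h2 : (2 : E) = 1 + 1 := one_add_one_eq_two.symm
  refine le_antisymm (not_lt.mp fun hpos => ?_) (by simpa [h2] using S.val.map_add 1 1)
  replace hpos : 1 ≤ S.val 2 := by
    revert hpos
    induction S.val 2 using WithTop.recTopCoe with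
    | top => exact fun _ => le_top
    | coe n => exact fun h => WithTop.coe_le_coe.mpr (WithTop.coe_lt_coe.mp h)
  obtain ⟨R, hcard, hR, hrep⟩ := S.residue_F
  simp only [eq_zero_or_le_ν_iff, WithTop.coe_zero, WithTop.coe_one] at hR hrep
  have hsucc : ∀ r ∈ R, S.σ (r + 1) = r + 1 ∧ 0 ≤ S.val (r + 1) := fun r hr =>
    ⟨by rw [map_add, map_one, (hR r hr).1], S.val.map_le_add (hR r hr).2 (by simp)⟩
  choose g hg using fun r hr => (hrep (r + 1) (hsucc r hr).1 (hsucc r hr).2).exists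
  have hgg : ∀ r hr, g (g r hr) (hg r hr).1 = r := fun r hr =>
    (hrep _ (hsucc _ (hg r hr).1).1 (hsucc _ (hg r hr).1).2).unique
      (hg _ (hg r hr).1) ⟨hr, by
        rw [show g r hr + 1 - r = 2 - (r + 1 - g r hr) by ring]
        exact S.val.map_le_sub hpos (hg r hr).2⟩
  have hg_ne : ∀ r hr, g r hr ≠ r := fun r hr h => by
    have := (hg r hr).2
    rw [h, add_sub_cancel_left, AddValuation.map_one] at this
    exact absurd this (by decide)
  have hsum : ∑ _r ∈ R, (1 : ZMod 2) = 0 :=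
    Finset.sum_involution g (fun _ _ => rfl) (fun r hr _ => hg_ne r hr) (fun r hr => (hg r hr).1)
      hgg
  rw [Finset.sum_const, nsmul_one, hcard, ZMod.natCast_eq_zero_iff_even] at hsum
  exact Nat.not_even_iff_odd.mpr S.q_odd hsum

/-- Since `2` is a unit, `x ± c` (with `x ∈ F`, `c ∈ √ε·F`) recover `2x` and `2c`; as `σ` swaps
them, they have the same valuation, which is thus at most that of `x` and of `c`. -/
lemma val_add_of_σ_eq_neg {x c : E} (hx : S.σ x = x) (hc : S.σ c = -c) :
    S.val (x + c) = min (S.val x) (S.val c) := by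
  have hσ : S.val (x - c) = S.val (x + c) := by
    rw [← val_σ (x + c), map_add, hx, hc, sub_eq_add_neg]
  have h2 (y : E) : S.val (2 * y) = S.val y := by
    rw [AddValuation.map_mul, val_two, zero_add]
  refine le_antisymm (le_min ?_ ?_) (S.val.map_add x c)
  · calc S.val (x + c) = min (S.val (x + c)) (S.val (x - c)) := by rw [hσ, min_self]
      _ ≤ S.val ((x + c) + (x - c)) := S.val.map_add _ _
      _ = S.val x := by rw [← h2 x]; ring_nf
  · calc S.val (x + c) = min (S.val (x + c)) (S.val (x - c)) := by rw [hσ, min_self]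
      _ ≤ S.val ((x + c) - (x - c)) := S.val.map_sub _ _
      _ = S.val c := by rw [← h2 c]; ring_nf

lemma val_mul_σ (x : E) : S.val (x * S.σ x) = S.val x + S.val x := by
  rw [AddValuation.map_mul, val_σ]

/-- With `x = a ā` and `c = ā b` one has `x (a ā + b b̄) = (x + c) (x - c)`, and
`val_add_of_σ_eq_neg` evaluates both factors. -/
lemma val_norm_add_norm {a b : E} (hab : a * S.σ b + S.σ a * b = 0) :
    S.val (a * S.σ a + b * S.σ b) = min (S.val a) (S.val b) + min (S.val a) (S.val b) := by
  rw [Monotone.map_min (f := fun v : WithTop ℤ => v + v) (monotone_id.add monotone_id),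
    ← val_mul_σ, ← val_mul_σ]
  rcases ne_or_eq (S.val (a * S.σ a)) (S.val (b * S.σ b)) with hne | heq
  · exact S.val.map_add_of_distinct_val hne
  rw [← heq, min_self]
  rcases eq_or_ne a 0 with rfl | ha
  · simpa using heq.symm
  have hfactor : a * S.σ a * (a * S.σ a + b * S.σ b) =
      (a * S.σ a + S.σ a * b) * (a * S.σ a + -(S.σ a * b)) := by
    linear_combination (S.σ a * b) * hab
  set x := a * S.σ a
  set c := S.σ a * b
  have hx : S.σ x = x := by rw [map_mul, S.σσ, mul_comm]
  have hc : S.σ c = -c := by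
    rw [map_mul, S.σσ]
    linear_combination hab
  have hc' : S.σ (-c) = -(-c) := by rw [map_neg, hc]
  have hval := congrArg S.val hfactor
  rw [AddValuation.map_mul _ x, AddValuation.map_mul _ (x + c), val_add_of_σ_eq_neg hx hc,
    val_add_of_σ_eq_neg hx hc', AddValuation.map_neg] at hval
  have hfin : S.val x ≠ ⊤ := S.val.ne_top_iff.mpr (mul_ne_zero ha ((map_ne_zero S.σ).mpr ha))
  refine le_antisymm ?_ (by simpa [heq] using S.val.map_add x (b * S.σ b))
  rw [← WithTop.add_le_add_iff_left hfin, hval]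
  exact add_le_add (min_le_left _ _) (min_le_left _ _)

lemma inSqεF_iff {x : E} : S.inSqεF x ↔ S.σ x = -x := by
  have hsqε : S.sqε ≠ 0 := fun h => S.ε_ne_zero (by rw [← S.sqε_sq, h, mul_zero])
  constructor
  · rintro ⟨f, hf, rfl⟩
    rw [map_mul, hf, S.sqε_conj, neg_mul]
  · intro hx
    exact ⟨x / S.sqε, by rw [map_div₀, hx, S.sqε_conj, neg_div_neg_eq],
      (mul_div_cancel₀ x hsqε).symm⟩

lemma mem_Tset_one_one {g : Matrix (Fin 2) (Fin 2) E} : g ∈ S.Tset 1 1 ↔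
    ∃ a b, g = !![a, b; b, a] ∧ a * S.σ a + b * S.σ b = 1 ∧ a * S.σ b + S.σ a * b = 0 := by
  simp only [Tset, Set.mem_ofPred_eq, mul_one, inSqεF_iff, map_mul, S.σσ, eq_neg_iff_add_eq_zero]

lemma inG_mul {g h : Matrix (Fin 2) (Fin 2) E} (hg : S.inG g) (hh : S.inG h) :
    S.inG (g * h) := by
  unfold inG at *
  rw [show S.mbar (g * h) = S.mbar g * S.mbar h from Matrix.map_mul, Matrix.transpose_mul]
  calc (S.mbar h)ᵀ * (S.mbar g)ᵀ * S.wmat * (g * h)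
      = (S.mbar h)ᵀ * ((S.mbar g)ᵀ * S.wmat * g) * h := by simp only [Matrix.mul_assoc]
    _ = S.wmat := by rw [hg, hh]

lemma Kset_mul {g h : Matrix (Fin 2) (Fin 2) E} (hg : g ∈ S.Kset) (hh : h ∈ S.Kset) :
    g * h ∈ S.Kset := by
  refine ⟨inG_mul hg.1 hh.1, fun i j => inOE_iff.mpr ?_⟩
  rw [Matrix.mul_apply]
  refine S.val.map_le_sum fun k _ => ?_
  rw [AddValuation.map_mul]
  exact add_nonneg (inOE_iff.mp (hg.2 i k)) (inOE_iff.mp (hh.2 k j))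

lemma mul_wmat_mul_mbar_transpose {g : Matrix (Fin 2) (Fin 2) E} (hg : S.inG g) :
    g * S.wmat * (S.mbar g)ᵀ = S.wmat := by
  have hw : S.wmat * S.wmat = 1 := by simp [wmat, Matrix.one_fin_two]
  have hinv : S.wmat * g * S.wmat * (S.mbar g)ᵀ = 1 := mul_eq_one_comm.mp <| by
    calc (S.mbar g)ᵀ * (S.wmat * g * S.wmat) = (S.mbar g)ᵀ * S.wmat * g * S.wmat := by
          simp only [Matrix.mul_assoc]
      _ = 1 := by rw [hg, hw]
  calc g * S.wmat * (S.mbar g)ᵀ = S.wmat * (S.wmat * g * S.wmat * (S.mbar g)ᵀ) := by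
        simp only [← Matrix.mul_assoc, hw, Matrix.one_mul]
    _ = S.wmat := by rw [hinv, Matrix.mul_one]

lemma first_row_relations {g : Matrix (Fin 2) (Fin 2) E} (hg : S.inG g) :
    g 0 0 * S.σ (g 0 1) + S.σ (g 0 0) * g 0 1 = 0 ∧
      g 0 0 * S.σ (g 1 1) + g 0 1 * S.σ (g 1 0) = 1 := by
  have h := mul_wmat_mul_mbar_transpose hg
  have h00 := congrFun (congrFun h 0) 0
  have h01 := congrFun (congrFun h 0) 1
  simp only [wmat, mbar, Fin.isValue, Matrix.mul_apply, of_apply, cons_val', cons_val_fin_one,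
    Fin.sum_univ_two, cons_val_zero, cons_val_one, transpose_apply, mul_zero, mul_one, zero_add,
    add_zero] at h00 h01
  exact ⟨by linear_combination h00, by linear_combination h01⟩

lemma inG_of_symm {a b : E} (h1 : a * S.σ a + b * S.σ b = 1)
    (h2 : a * S.σ b + S.σ a * b = 0) : S.inG !![a, b; b, a] := by
  ext i j
  fin_cases i <;> fin_cases j <;> simp [mbar, wmat, Matrix.mul_apply, Fin.sum_univ_two] <;>
    first | linear_combination h1 | linear_combination h2

lemma Tset_one_one_subset_Kset : S.Tset 1 1 ⊆ S.Kset := by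
  intro g hg
  obtain ⟨a, b, rfl, h1, h2⟩ := mem_Tset_one_one.mp hg
  have hmin : 0 ≤ min (S.val a) (S.val b) := by
    rw [← nonneg_add_self_iff, ← val_norm_add_norm h2, h1, AddValuation.map_one]
  obtain ⟨ha, hb⟩ := le_min_iff.mp hmin
  refine ⟨inG_of_symm h1 h2, fun i j => inOE_iff.mpr ?_⟩
  fin_cases i <;> fin_cases j <;> simp [ha, hb]

lemma exists_mul_σ_eq {y : E} (hy : S.σ y = y) (hv : S.val y = 0) :
    ∃ p, p ≠ 0 ∧ p * S.σ p = y := by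
  have hy0 : y ≠ 0 := fun h => by simp [h] at hv
  rw [val_of_ne_zero hy0, WithTop.coe_eq_zero] at hv
  obtain ⟨p, hp, -, hpy⟩ := S.norm_surj_units y hy hy0 hv
  exact ⟨p, hp, hpy⟩

lemma min_val_first_row_eq_zero {k : Matrix (Fin 2) (Fin 2) E} (hk : k ∈ S.Kset) :
    min (S.val (k 0 0)) (S.val (k 0 1)) = 0 := by
  have hint (i j) : 0 ≤ S.val (k i j) := inOE_iff.mp (hk.2 i j)
  refine le_antisymm ?_ (le_min (hint 0 0) (hint 0 1))
  calc min (S.val (k 0 0)) (S.val (k 0 1))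
      ≤ min (S.val (k 0 0 * S.σ (k 1 1))) (S.val (k 0 1 * S.σ (k 1 0))) := by
        simp only [AddValuation.map_mul, val_σ]
        exact min_le_min (le_add_of_nonneg_right (hint 1 1)) (le_add_of_nonneg_right (hint 1 0))
    _ ≤ S.val (k 0 0 * S.σ (k 1 1) + k 0 1 * S.σ (k 1 0)) := S.val.map_add _ _
    _ = 0 := by rw [(first_row_relations hk.1).2, AddValuation.map_one]

lemma exists_mem_Bop_mem_Tset_mul_eq {k : Matrix (Fin 2) (Fin 2) E} (hk : k ∈ S.Kset) :
    ∃ b ∈ S.Bop, ∃ t ∈ S.Tset 1 1, b * t = k := by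
  have hiso := (first_row_relations hk.1).1
  have hprim := min_val_first_row_eq_zero hk
  set α := k 0 0
  set β := k 0 1
  have hN : S.val (α * S.σ α + β * S.σ β) = 0 := by
    rw [val_norm_add_norm (by linear_combination hiso), hprim, add_zero]
  obtain ⟨p, hp, hpN⟩ := exists_mul_σ_eq (by simp only [map_add, map_mul, S.σσ]; ring) hN
  have hσp : S.σ p ≠ 0 := (map_ne_zero S.σ).mpr hp
  set a := α / p
  set b := β / p
  have h1 : a * S.σ a + b * S.σ b = 1 := by
    simp only [a, b, map_div₀]
    field_simp
    linear_combination -hpN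
  have h2 : a * S.σ b + S.σ a * b = 0 := by
    simp only [a, b, map_div₀]
    field_simp
    linear_combination hiso
  have ht : !![a, b; b, a] ∈ S.Tset 1 1 := mem_Tset_one_one.mpr ⟨a, b, rfl, h1, h2⟩
  have ht' : !![S.σ a, S.σ b; S.σ b, S.σ a] ∈ S.Tset 1 1 :=
    mem_Tset_one_one.mpr ⟨_, _, rfl, by simp only [S.σσ]; linear_combination h1,
      by simp only [S.σσ]; linear_combination h2⟩
  have hinv : !![S.σ a, S.σ b; S.σ b, S.σ a] * !![a, b; b, a] = 1 := by
    ext i j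
    fin_cases i <;> fin_cases j <;> simp [Matrix.mul_apply] <;>
      first | linear_combination h1 | linear_combination h2
  refine ⟨k * !![S.σ a, S.σ b; S.σ b, S.σ a],
    ⟨Kset_mul hk (Tset_one_one_subset_Kset ht'), ?_⟩, _, ht,
    by rw [Matrix.mul_assoc, hinv, Matrix.mul_one]⟩
  simp only [map_div₀, Fin.isValue, Matrix.mul_apply, of_apply, cons_val', cons_val_one,
    cons_val_fin_one, Fin.sum_univ_two, cons_val_zero, a, b]
  field_simp
  linear_combination hiso

lemma Kset_eq_Bop_mul_Tset_one_one : S.Kset = S.Bop * S.Tset 1 1 := by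
  refine Set.Subset.antisymm (fun k hk => ?_) ?_
  · obtain ⟨b, hb, t, ht, rfl⟩ := exists_mem_Bop_mem_Tset_mul_eq hk
    exact Set.mul_mem_mul hb ht
  · rintro _ ⟨b, hb, t, ht, rfl⟩
    exact Kset_mul hb.1 (Tset_one_one_subset_Kset ht)

variable (S) in
def conjη : Matrix (Fin 2) (Fin 2) E →ₙ* Matrix (Fin 2) (Fin 2) E where
  toFun k := S.ηmat * k * S.ηinv
  map_mul' x y := by
    have h : S.ηinv * S.ηmat = 1 := by
      simp [ηinv, ηmat, Matrix.one_fin_two, inv_mul_cancel₀ S.ϖ_ne_zero]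
    simp only [Matrix.mul_assoc, ← Matrix.mul_assoc S.ηinv, h, Matrix.one_mul]

end Setting

/-- `K = B^op·T_{1,1}`, and consequently
`K^η = (B^op)^η·(T_{1,1})^η`, where `H^η = ηHη⁻¹` with `η = diag(1,ϖ)`. -/
theorem statement12 {E : Type*} [Field E] (S : Setting E) :
    S.Kset = S.Bop * S.Tset 1 1 ∧
    ((fun k => S.ηmat * k * S.ηinv) '' S.Kset) =
      ((fun k => S.ηmat * k * S.ηinv) '' S.Bop) *
        ((fun k => S.ηmat * k * S.ηinv) '' S.Tset 1 1) := by
  have hK : S.Kset = S.Bop * S.Tset 1 1 := Setting.Kset_eq_Bop_mul_Tset_one_one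
  exact ⟨hK, hK ▸ Set.image_mul S.conjη⟩
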